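/- Let c > 1 be an irrational real number and define f(n) = ⌊(n+1)/c⌋ − ⌊n/c⌋ for positive integers n. There exists a constant C > 0 such that for every positive integer m, with x = ⌊m·c⌋, one has | Σ_{n=1}^x f(n)/n − ( 1/c + (1/c)(log m + log c + γ) − Σ_{n=1}^∞ {c⁻¹(n+1)} / (n(n+1)) ) | ≤ C/m, where γ is Euler's constant and the infinite series converges. -/

import Mathlib

open Real Finset

private lemma tele_sum (k : ℕ) : ∀ N : ℕ, ∑ n ∈ Finset.range N,
    (1:ℝ)/(((n:ℝ)+(k:ℝ)+1)*((n:ℝ)+(k:ℝ)+2)) = 1/((k:ℝ)+1) - 1/((N:ℝ)+(k:ℝ)+1) := by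
  intro N
  induction N with
  | zero => simp
  | succ N ih =>
    rw [Finset.sum_range_succ, ih]
    have h1 : ((N:ℝ)+(k:ℝ)+1) ≠ 0 := by positivity
    have h2 : ((N:ℝ)+(k:ℝ)+2) ≠ 0 := by positivity
    have h3 : (((N:ℕ)+1:ℕ):ℝ) = (N:ℝ)+1 := by push_cast; ring
    rw [h3]
    have h4 : ((N:ℝ)+1+(k:ℝ)+1) ≠ 0 := by positivity
    field_simp
    ring

private lemma tele_le (k N : ℕ) : ∑ n ∈ Finset.range N,
    (1:ℝ)/(((n:ℝ)+(k:ℝ)+1)*((n:ℝ)+(k:ℝ)+2)) ≤ 1/((k:ℝ)+1) := by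
  rw [tele_sum]
  have : 0 < 1/((N:ℝ)+(k:ℝ)+1) := by positivity
  linarith

private lemma harmonic_cast (k : ℕ) :
    ((harmonic k : ℚ) : ℝ) = ∑ n ∈ Finset.range k, 1/((n:ℝ)+1) := by
  rw [harmonic, Rat.cast_sum]
  refine Finset.sum_congr rfl fun n _ => ?_
  push_cast
  rw [one_div]

private lemma harmonic_est (n : ℕ) (hn : 1 ≤ n) :
    |((harmonic n : ℚ) : ℝ) - (Real.log n + Real.eulerMascheroniConstant)| ≤ 1/(n:ℝ) := by
  have h1 := Real.eulerMascheroniConstant_lt_eulerMascheroniSeq' n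
  have h2 := Real.eulerMascheroniSeq_lt_eulerMascheroniConstant n
  rw [Real.eulerMascheroniSeq', if_neg (by omega)] at h1
  rw [Real.eulerMascheroniSeq] at h2
  have hn' : (0:ℝ) < n := by exact_mod_cast hn
  have hlog : Real.log ((n:ℝ)+1) - Real.log n ≤ 1/n := by
    rw [← Real.log_div (by positivity) (by positivity)]
    have h := Real.log_le_sub_one_of_pos (show (0:ℝ) < ((n:ℝ)+1)/n by positivity)
    have : ((n:ℝ)+1)/n - 1 = 1/n := by field_simp; ring
    linarith
  rw [abs_le]
  constructor
  · have : 0 < 1/(n:ℝ) := by positivity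
    linarith
  · linarith

private lemma sum_id (c : ℝ) : ∀ x : ℕ, 1 ≤ x →
    ∑ n ∈ Finset.Icc 1 x, ((⌊((n : ℝ) + 1) / c⌋ : ℝ) - (⌊(n : ℝ) / c⌋ : ℝ)) / (n : ℝ)
      = (⌊((x:ℝ)+1)/c⌋:ℝ)/(x:ℝ) - (⌊1/c⌋:ℝ)
        + ∑ n ∈ Finset.Icc 2 x, (⌊(n:ℝ)/c⌋:ℝ) / (((n:ℝ)-1)*(n:ℝ)) := by
  intro x hx
  induction x, hx using Nat.le_induction with
  | base => norm_num
  | succ x hx ih =>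
    rw [Finset.sum_Icc_succ_top (by omega), Finset.sum_Icc_succ_top (by omega), ih]
    have hx0 : (0:ℝ) < x := by exact_mod_cast hx
    push_cast
    have h1 : (x:ℝ) ≠ 0 := hx0.ne'
    have h2 : (x:ℝ)+1 ≠ 0 := by positivity
    field_simp
    ring_nf
    field_simp
    ring

private lemma reindex (f : ℕ → ℝ) : ∀ x : ℕ, 1 ≤ x →
    ∑ n ∈ Finset.Icc 2 x, f n / (((n:ℝ)-1)*(n:ℝ))
      = ∑ n ∈ Finset.range (x-1), f (n+2) / (((n:ℝ)+1)*((n:ℝ)+2)) := by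
  intro x hx
  induction x, hx using Nat.le_induction with
  | base => simp
  | succ x hx ih =>
    rw [Finset.sum_Icc_succ_top (by omega), ih]
    have h1 : x + 1 - 1 = (x-1) + 1 := by omega
    rw [h1, Finset.sum_range_succ]
    have h2 : x - 1 + 2 = x + 1 := by omega
    rw [h2]
    have hc : ((x-1:ℕ):ℝ) = (x:ℝ) - 1 := by
      push_cast [hx]; ring
    rw [hc]
    push_cast
    ring

private lemma reindex' (c : ℝ) (x : ℕ) (hx : 1 ≤ x) :
    ∑ n ∈ Finset.Icc 2 x, (⌊(n:ℝ)/c⌋:ℝ) / (((n:ℝ)-1)*(n:ℝ))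
      = ∑ n ∈ Finset.range (x-1), (⌊((n:ℝ)+2)/c⌋:ℝ) / (((n:ℝ)+1)*((n:ℝ)+2)) := by
  rw [reindex (fun n : ℕ => (⌊(n:ℝ)/c⌋:ℝ)) x hx]
  refine Finset.sum_congr rfl fun n _ => ?_
  have : ((n+2:ℕ):ℝ) = (n:ℝ)+2 := by push_cast; ring
  rw [this]

/-- For irrational `c > 1` and `f(n) = ⌊(n+1)/c⌋ − ⌊n/c⌋`, there is `C > 0`
such that for every positive integer `m`, with `x = ⌊m·c⌋`,
`| Σ_{n=1}^x f(n)/n − ( 1/c + (1/c)(log m + log c + γ) − Σ_{n≥1} {c⁻¹(n+1)}/(n(n+1)) ) | ≤ C/m`,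
where the series converges. -/
theorem stmt12 (c : ℝ) (hc : Irrational c) (hc1 : 1 < c) :
    Summable (fun n : ℕ =>
      Int.fract (c⁻¹ * ((n : ℝ) + 2)) / (((n : ℝ) + 1) * ((n : ℝ) + 2))) ∧
    ∃ C : ℝ, 0 < C ∧ ∀ m : ℕ, 0 < m →
      |(∑ n ∈ Finset.Icc 1 ⌊(m : ℝ) * c⌋.toNat,
            ((⌊((n : ℝ) + 1) / c⌋ : ℝ) - (⌊(n : ℝ) / c⌋ : ℝ)) / (n : ℝ))
        - (1 / c + (1 / c) * (Real.log m + Real.log c + Real.eulerMascheroniConstant)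
            - ∑' n : ℕ, Int.fract (c⁻¹ * ((n : ℝ) + 2)) / (((n : ℝ) + 1) * ((n : ℝ) + 2)))|
        ≤ C / m := by
  have hc0 : (0:ℝ) < c := lt_trans one_pos hc1
  have hcinv1 : c⁻¹ < 1 := inv_lt_one_of_one_lt₀ hc1
  have hcinv0 : 0 < c⁻¹ := by positivity
  set h : ℕ → ℝ := fun n : ℕ =>
      Int.fract (c⁻¹ * ((n : ℝ) + 2)) / (((n : ℝ) + 1) * ((n : ℝ) + 2)) with hh
  have hnn : ∀ n, 0 ≤ h n := fun n => div_nonneg (Int.fract_nonneg _) (by positivity)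
  have hle : ∀ n : ℕ, h n ≤ 1/(((n:ℝ)+1)*((n:ℝ)+2)) := by
    intro n
    simp only [hh]
    have : Int.fract (c⁻¹ * ((n:ℝ)+2)) ≤ 1 := (Int.fract_lt_one _).le
    gcongr
  have hsum : Summable h := by
    apply summable_of_sum_range_le hnn (c := 1)
    intro N
    calc ∑ n ∈ Finset.range N, h n
        ≤ ∑ n ∈ Finset.range N, 1/(((n:ℝ)+1)*((n:ℝ)+2)) :=
          Finset.sum_le_sum (fun n _ => hle n)
      _ ≤ 1 := by simpa using tele_le 0 N
  refine ⟨hsum, ?_⟩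
  -- the key estimate for m ≥ 2
  have key : ∀ m : ℕ, 2 ≤ m →
      |(∑ n ∈ Finset.Icc 1 ⌊(m : ℝ) * c⌋.toNat,
            ((⌊((n : ℝ) + 1) / c⌋ : ℝ) - (⌊(n : ℝ) / c⌋ : ℝ)) / (n : ℝ))
        - (1 / c + (1 / c) * (Real.log m + Real.log c + Real.eulerMascheroniConstant)
            - tsum h)| ≤ 8 / m := by
    intro m hm
    have hm0 : (0:ℝ) < m := by exact_mod_cast Nat.lt_of_lt_of_le Nat.zero_lt_two hm
    have hmR2 : (2:ℝ) ≤ m := by exact_mod_cast hm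
    set x := ⌊(m:ℝ)*c⌋.toNat with hxdef
    have hmc0 : 0 < (m:ℝ)*c := by positivity
    have hfl : (0:ℤ) ≤ ⌊(m:ℝ)*c⌋ := Int.floor_nonneg.mpr hmc0.le
    have hxcast : (x:ℝ) = ((⌊(m:ℝ)*c⌋:ℤ):ℝ) := by
      rw [hxdef]; exact_mod_cast congrArg (fun z : ℤ => (z : ℝ)) (Int.toNat_of_nonneg hfl)
    have hx_le : (x:ℝ) ≤ (m:ℝ)*c := by rw [hxcast]; exact Int.floor_le _
    have hx_gt : (m:ℝ)*c < (x:ℝ) + 1 := by rw [hxcast]; exact Int.lt_floor_add_one _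
    have hmx : m ≤ x := by
      by_contra hcon
      push_neg at hcon
      have h1 : (x:ℝ) + 1 ≤ m := by exact_mod_cast hcon
      have h2 : (m:ℝ) ≤ (m:ℝ)*c := le_mul_of_one_le_right hm0.le hc1.le
      linarith
    have hx2 : 2 ≤ x := le_trans hm hmx
    have hx1 : 1 ≤ x := by omega
    have hxR : (2:ℝ) ≤ (x:ℝ) := by exact_mod_cast hx2
    have hx0 : (0:ℝ) < x := by linarith
    have hmxR : (m:ℝ) ≤ (x:ℝ) := by exact_mod_cast hmx
    have hxm1 : ((x-1:ℕ):ℝ) = (x:ℝ) - 1 := by push_cast [hx1]; ring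
    have hxm1pos : (0:ℝ) < (x:ℝ) - 1 := by linarith
    -- floor of 1/c is 0
    have hfloor0 : ⌊(1:ℝ)/c⌋ = 0 := by
      rw [Int.floor_eq_zero_iff]
      constructor
      · positivity
      · rw [one_div]; exact hcinv1
    -- per-term splitting
    have hterm : ∀ n : ℕ, (⌊((n:ℝ)+2)/c⌋:ℝ) / (((n:ℝ)+1)*((n:ℝ)+2))
        = c⁻¹ * (1/((n:ℝ)+1)) - h n := by
      intro n
      have e1 : ((n:ℝ)+2)/c = c⁻¹*((n:ℝ)+2) := by rw [div_eq_inv_mul]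
      rw [e1, hh]
      have e2 : ((⌊c⁻¹*((n:ℝ)+2)⌋:ℤ):ℝ) = c⁻¹*((n:ℝ)+2) - Int.fract (c⁻¹*((n:ℝ)+2)) := by
        rw [Int.self_sub_fract]
      rw [e2]
      have hn1 : ((n:ℝ)+1) ≠ 0 := by positivity
      have hn2 : ((n:ℝ)+2) ≠ 0 := by positivity
      field_simp
    have hsum_split : ∑ n ∈ Finset.range (x-1), (⌊((n:ℝ)+2)/c⌋:ℝ) / (((n:ℝ)+1)*((n:ℝ)+2))
        = c⁻¹ * ((harmonic (x-1) : ℚ):ℝ) - ∑ n ∈ Finset.range (x-1), h n := by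
      rw [harmonic_cast, Finset.mul_sum, ← Finset.sum_sub_distrib]
      exact Finset.sum_congr rfl fun n _ => hterm n
    -- tail facts
    have hsplit_tsum := Summable.sum_add_tsum_nat_add (f := h) (x-1) hsum
    have htail_nn : 0 ≤ ∑' i : ℕ, h (i + (x-1)) :=
      tsum_nonneg (fun i => hnn _)
    have htail_ub : ∑' i : ℕ, h (i + (x-1)) ≤ 1/(x:ℝ) := by
      apply Real.tsum_le_of_sum_range_le (fun n => hnn _)
      intro N
      calc ∑ n ∈ Finset.range N, h (n+(x-1))
          ≤ ∑ n ∈ Finset.range N, 1/(((n:ℝ)+((x-1:ℕ):ℝ)+1)*((n:ℝ)+((x-1:ℕ):ℝ)+2)) := by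
            refine Finset.sum_le_sum fun n _ => ?_
            have hc2 : ((n+(x-1):ℕ):ℝ) = (n:ℝ)+((x-1:ℕ):ℝ) := by push_cast; ring
            have := hle (n+(x-1))
            rw [hc2] at this
            exact this
        _ ≤ 1/(((x-1:ℕ):ℝ)+1) := tele_le (x-1) N
        _ = 1/(x:ℝ) := by rw [hxm1]; ring_nf
    -- harmonic estimate
    have hH : |((harmonic (x-1) : ℚ):ℝ)
        - (Real.log ((x:ℝ)-1) + Real.eulerMascheroniConstant)| ≤ 1/((x:ℝ)-1) := by
      have := harmonic_est (x-1) (by omega)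
      rwa [hxm1] at this
    -- log estimate
    have hlogmc : Real.log m + Real.log c = Real.log ((m:ℝ)*c) :=
      (Real.log_mul hm0.ne' hc0.ne').symm
    have hlog2 : |Real.log ((x:ℝ)-1) - (Real.log m + Real.log c)| ≤ 2/((x:ℝ)-1) := by
      rw [hlogmc]
      have hlt : (x:ℝ)-1 < (m:ℝ)*c := by linarith
      have hub : Real.log ((m:ℝ)*c) - Real.log ((x:ℝ)-1) ≤ 2/((x:ℝ)-1) := by
        rw [← Real.log_div (by positivity) hxm1pos.ne']
        have hlg := Real.log_le_sub_one_of_pos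
          (show (0:ℝ) < (m:ℝ)*c/((x:ℝ)-1) by positivity)
        have hq : (m:ℝ)*c/((x:ℝ)-1) - 1 ≤ 2/((x:ℝ)-1) := by
          rw [div_sub_one hxm1pos.ne']
          gcongr
          linarith
        linarith
      have hlb : Real.log ((x:ℝ)-1) ≤ Real.log ((m:ℝ)*c) :=
        Real.log_le_log hxm1pos hlt.le
      rw [abs_le]
      constructor <;> linarith
    -- assemble
    rw [sum_id c x hx1, reindex' c x hx1, hsum_split, hfloor0]
    have hsplit2 :
        (⌊((x:ℝ)+1)/c⌋:ℝ)/(x:ℝ) - ((0:ℤ):ℝ)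
          + (c⁻¹ * ((harmonic (x-1) : ℚ):ℝ) - ∑ n ∈ Finset.range (x-1), h n)
          - (1/c + (1/c) * (Real.log m + Real.log c + Real.eulerMascheroniConstant)
              - tsum h)
        = ((⌊((x:ℝ)+1)/c⌋:ℝ)/(x:ℝ) - c⁻¹)
          + c⁻¹ * (((harmonic (x-1) : ℚ):ℝ)
              - (Real.log m + Real.log c + Real.eulerMascheroniConstant))
          + (tsum h - ∑ n ∈ Finset.range (x-1), h n) := by
      rw [one_div]
      push_cast
      ring
    rw [hsplit2]
    have hb1 : |(⌊((x:ℝ)+1)/c⌋:ℝ)/(x:ℝ) - c⁻¹| ≤ 1/(m:ℝ) := by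
      have e : (⌊((x:ℝ)+1)/c⌋:ℝ)/(x:ℝ) - c⁻¹
          = (c⁻¹ - Int.fract (((x:ℝ)+1)/c))/(x:ℝ) := by
        rw [← Int.self_sub_fract]
        field_simp
        ring
      rw [e, abs_div, abs_of_pos hx0]
      have hnum : |c⁻¹ - Int.fract (((x:ℝ)+1)/c)| ≤ 1 := by
        have f0 := Int.fract_nonneg (((x:ℝ)+1)/c)
        have f1 := Int.fract_lt_one (((x:ℝ)+1)/c)
        rw [abs_le]
        constructor <;> linarith
      calc |c⁻¹ - Int.fract (((x:ℝ)+1)/c)|/(x:ℝ) ≤ 1/(x:ℝ) := by gcongr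
        _ ≤ 1/(m:ℝ) := by gcongr
    have hb2 : |c⁻¹ * (((harmonic (x-1) : ℚ):ℝ)
        - (Real.log m + Real.log c + Real.eulerMascheroniConstant))| ≤ 6/(m:ℝ) := by
      rw [abs_mul, abs_of_pos hcinv0]
      have h1 : |((harmonic (x-1) : ℚ):ℝ)
          - (Real.log m + Real.log c + Real.eulerMascheroniConstant)| ≤ 3/((x:ℝ)-1) := by
        calc |((harmonic (x-1) : ℚ):ℝ)
            - (Real.log m + Real.log c + Real.eulerMascheroniConstant)|
            ≤ |((harmonic (x-1) : ℚ):ℝ)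
                - (Real.log ((x:ℝ)-1) + Real.eulerMascheroniConstant)|
              + |(Real.log ((x:ℝ)-1) + Real.eulerMascheroniConstant)
                - (Real.log m + Real.log c + Real.eulerMascheroniConstant)| :=
              abs_sub_le _ _ _
          _ ≤ 1/((x:ℝ)-1) + 2/((x:ℝ)-1) := by
              refine add_le_add hH ?_
              have e2 : (Real.log ((x:ℝ)-1) + Real.eulerMascheroniConstant)
                  - (Real.log m + Real.log c + Real.eulerMascheroniConstant)
                  = Real.log ((x:ℝ)-1) - (Real.log m + Real.log c) := by ring
              rw [e2]
              exact hlog2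
          _ = 3/((x:ℝ)-1) := by ring
      have h2 : 3/((x:ℝ)-1) ≤ 6/(m:ℝ) := by
        have hhalf : (m:ℝ)/2 ≤ (x:ℝ)-1 := by linarith
        calc (3:ℝ)/((x:ℝ)-1) ≤ 3/((m:ℝ)/2) := by
              gcongr
          _ = 6/(m:ℝ) := by
              rw [div_div_eq_mul_div]
              norm_num
      calc c⁻¹ * |((harmonic (x-1) : ℚ):ℝ)
          - (Real.log m + Real.log c + Real.eulerMascheroniConstant)|
          ≤ 1 * (6/(m:ℝ)) :=
            mul_le_mul hcinv1.le (h1.trans h2) (abs_nonneg _) one_pos.le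
        _ = 6/(m:ℝ) := one_mul _
    have hb3 : |tsum h - ∑ n ∈ Finset.range (x-1), h n| ≤ 1/(m:ℝ) := by
      have e : tsum h - ∑ n ∈ Finset.range (x-1), h n = ∑' i : ℕ, h (i + (x-1)) := by
        rw [← hsplit_tsum]; ring
      rw [e, abs_of_nonneg htail_nn]
      calc ∑' i : ℕ, h (i + (x-1)) ≤ 1/(x:ℝ) := htail_ub
        _ ≤ 1/(m:ℝ) := by gcongr
    calc |(⌊((x:ℝ)+1)/c⌋:ℝ)/(x:ℝ) - c⁻¹
          + c⁻¹ * (((harmonic (x-1) : ℚ):ℝ)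
              - (Real.log m + Real.log c + Real.eulerMascheroniConstant))
          + (tsum h - ∑ n ∈ Finset.range (x-1), h n)|
        ≤ |(⌊((x:ℝ)+1)/c⌋:ℝ)/(x:ℝ) - c⁻¹|
          + |c⁻¹ * (((harmonic (x-1) : ℚ):ℝ)
              - (Real.log m + Real.log c + Real.eulerMascheroniConstant))|
          + |tsum h - ∑ n ∈ Finset.range (x-1), h n| := abs_add_three _ _ _
      _ ≤ 1/(m:ℝ) + 6/(m:ℝ) + 1/(m:ℝ) := add_le_add (add_le_add hb1 hb2) hb3
      _ = 8/(m:ℝ) := by ring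
  -- choose the constant
  set A := |(∑ n ∈ Finset.Icc 1 ⌊((1:ℕ) : ℝ) * c⌋.toNat,
        ((⌊((n : ℝ) + 1) / c⌋ : ℝ) - (⌊(n : ℝ) / c⌋ : ℝ)) / (n : ℝ))
      - (1 / c + (1 / c) * (Real.log ((1:ℕ):ℝ) + Real.log c + Real.eulerMascheroniConstant)
          - tsum h)| with hA
  refine ⟨A + 9, by rw [hA]; positivity, fun m hm => ?_⟩
  rcases Nat.lt_or_ge m 2 with h2 | h2
  · have hm1 : m = 1 := by omega
    subst hm1
    rw [← hA, Nat.cast_one, div_one]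
    linarith
  · have hk := key m h2
    have hA0 : 0 ≤ A := hA ▸ abs_nonneg _
    have hm0 : (0:ℝ) < m := by exact_mod_cast hm
    calc |(∑ n ∈ Finset.Icc 1 ⌊(m : ℝ) * c⌋.toNat,
            ((⌊((n : ℝ) + 1) / c⌋ : ℝ) - (⌊(n : ℝ) / c⌋ : ℝ)) / (n : ℝ))
        - (1 / c + (1 / c) * (Real.log m + Real.log c + Real.eulerMascheroniConstant)
            - tsum h)| ≤ 8/(m:ℝ) := hk
      _ ≤ (A + 9)/(m:ℝ) := by gcongr; linarith
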